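/- arXiv:2202.08217 — 4 statements merged into one kernel-verified Lean document; each statement's English description precedes it below -/
import Mathlib

section
/- Let ω : ℕ → ℂ (indexed by n ≥ 1) be a sequence with liminf_{n→∞}(Re ω_{n+1} − Re ω_n) = γ for some γ > 0, and for T > 0 let G(w) = −Tπ/(T²w² − π²). Then for every ε ∈ (0,1), every T > 2π/(γ√(1−ε)) and every a > 0 there exists n₀ ∈ ℕ such that a|G(ω_n)| ≤ πε/(Tγ²(1−ε)) for every n ≥ n₀, and moreover a Σ_{n=n₀}^∞ |G(ω_n)| ≤ πε/(Tγ²(1−ε)). -/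
/-!
Since the liminf of the gaps `Re ω_{n+1} - Re ω_n` is positive, `Re ω_n`, hence `‖ω_n‖`, grows at
least linearly. For large `‖w‖` the denominator `T²w² - π²` is comparable to `T²‖w‖²`, so
`‖G(ω_n)‖ = O(1/n²)` is summable. The tails of a convergent series of nonnegative terms tend to
zero and dominate each of their terms, so some tail is below any prescribed positive bound.
-/

open Filter

/-- In `ℝ` an unbounded-below sequence has junk `liminf` equal to `0`, whence the sign condition. -/
theorem Real.eventually_lt_of_nonneg_lt_liminf {α : Type*} {f : Filter α} {u : α → ℝ} {b : ℝ}
    (hb : 0 ≤ b) (h : b < liminf u f) : ∀ᶠ x in f, b < u x := by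
  refine eventually_lt_of_lt_liminf h ?_
  by_contra hu
  rw [Real.liminf_of_not_isBoundedUnder hu] at h
  exact hb.not_gt h

theorem eventually_mul_le_of_eventually_le_sub {u : ℕ → ℝ} {c : ℝ} (hc : 0 < c)
    (h : ∀ᶠ n in atTop, c ≤ u (n + 1) - u n) : ∀ᶠ n : ℕ in atTop, c / 2 * n ≤ u n := by
  obtain ⟨N, hN⟩ := eventually_atTop.1 h
  have hlin : ∀ n, N ≤ n → u N + c * (n - N) ≤ u n := by
    intro n hn
    induction n, hn using Nat.le_induction with
    | base => simp
    | succ n hn ih =>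
      have := hN n hn
      push_cast
      linarith
  have hlarge : ∀ᶠ n : ℕ in atTop, (c * N - u N) / (c / 2) ≤ n :=
    tendsto_natCast_atTop_atTop.eventually_ge_atTop _
  filter_upwards [eventually_ge_atTop N, hlarge] with n hn hn'
  rw [div_le_iff₀ (by positivity)] at hn'
  linarith [hlin n hn]

theorem norm_div_sub_le_of_two_mul_norm_le {𝕜 : Type*} [NormedField 𝕜] {a z b : 𝕜}
    (h : 2 * ‖b‖ ≤ ‖z‖) : ‖a / (z - b)‖ ≤ 2 * ‖a‖ / ‖z‖ := by
  rcases eq_or_ne z 0 with rfl | hz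
  · have hb : b = 0 := norm_le_zero_iff.1 (by rw [norm_zero] at h; linarith)
    simp [hb]
  have hz' : 0 < ‖z‖ := norm_pos_iff.2 hz
  calc ‖a / (z - b)‖ = ‖a‖ / ‖z - b‖ := norm_div a (z - b)
    _ ≤ ‖a‖ / (‖z‖ / 2) :=
        div_le_div_of_nonneg_left (norm_nonneg a) (by positivity)
          (by linarith [norm_sub_norm_le z b])
    _ = 2 * ‖a‖ / ‖z‖ := by field_simp

theorem summable_norm_div_mul_sq_sub {ω : ℕ → ℂ} {c : ℝ} (hc : 0 < c)
    (hω : ∀ᶠ n : ℕ in atTop, c * n ≤ ‖ω n‖) {a z b : ℂ} (hz : z ≠ 0) :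
    Summable fun n => ‖a / (z * ω n ^ 2 - b)‖ := by
  have hz' : 0 < ‖z‖ := norm_pos_iff.2 hz
  set K := 2 * ‖a‖ / (‖z‖ * c ^ 2)
  have hK : Summable fun n : ℕ => K * (1 / (n : ℝ) ^ 2) :=
    (Real.summable_one_div_nat_pow.2 one_lt_two).mul_left K
  have hlarge : ∀ᶠ n : ℕ in atTop, 2 * ‖b‖ / (‖z‖ * c ^ 2) ≤ (n : ℝ) ^ 2 :=
    (tendsto_pow_atTop two_ne_zero).comp tendsto_natCast_atTop_atTop |>.eventually_ge_atTop _
  refine Summable.of_norm_bounded_eventually hK ?_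
  rw [Nat.cofinite_eq_atTop]
  filter_upwards [hω, hlarge, eventually_gt_atTop 0] with n hn hn' hn0
  have hn0' : (0 : ℝ) < n := Nat.cast_pos.2 hn0
  have hsq : ‖z‖ * (c * n) ^ 2 ≤ ‖z * ω n ^ 2‖ := by
    rw [norm_mul, norm_pow]
    gcongr
  rw [div_le_iff₀ (by positivity)] at hn'
  calc ‖‖a / (z * ω n ^ 2 - b)‖‖ = ‖a / (z * ω n ^ 2 - b)‖ := norm_norm _
    _ ≤ 2 * ‖a‖ / ‖z * ω n ^ 2‖ := norm_div_sub_le_of_two_mul_norm_le (by nlinarith)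
    _ ≤ 2 * ‖a‖ / (‖z‖ * (c * n) ^ 2) := by gcongr
    _ = K * (1 / (n : ℝ) ^ 2) := by simp only [K]; field_simp

theorem exists_tail_tsum_le {F : ℕ → ℝ} (hF : Summable F) (hF0 : ∀ n, 0 ≤ F n) {δ : ℝ}
    (hδ : 0 < δ) : ∃ n₀, (∀ n, n₀ ≤ n → F n ≤ δ) ∧ ∑' k, F (n₀ + k) ≤ δ := by
  obtain ⟨n₀, hn₀⟩ := eventually_atTop.1 ((tendsto_sum_nat_add F).eventually_lt_const hδ)
  have htail : ∑' k, F (n₀ + k) < δ := by simpa only [add_comm] using hn₀ n₀ le_rfl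
  refine ⟨n₀, fun n hn => ?_, htail.le⟩
  have hshift : Summable fun k => F (n₀ + k) := hF.comp_injective (add_right_injective n₀)
  calc F n = F (n₀ + (n - n₀)) := by rw [Nat.add_sub_cancel' hn]
    _ ≤ ∑' k, F (n₀ + k) := hshift.le_tsum (n - n₀) fun k _ => hF0 _
    _ ≤ δ := htail.le

/-- If `liminf (Re ω_{n+1} - Re ω_n) = γ > 0` and `G(w) = -Tπ/(T²w² - π²)`, then for every
`ε ∈ (0,1)`, every `T > 2π/(γ√(1-ε))` and every `a > 0` there exists `n₀` such that
`a|G(ω_n)| ≤ πε/(Tγ²(1-ε))` for every `n ≥ n₀`, and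
`a Σ_{n=n₀}^∞ |G(ω_n)| ≤ πε/(Tγ²(1-ε))`. -/
theorem stmt4 (ω : ℕ → ℂ) (γ : ℝ) (hγ : 0 < γ)
    (hlim : Filter.atTop.liminf (fun n : ℕ => (ω (n + 1)).re - (ω n).re) = γ) :
    ∀ ε ∈ Set.Ioo (0:ℝ) 1, ∀ T : ℝ, T > 2 * Real.pi / (γ * Real.sqrt (1 - ε)) →
    ∀ a : ℝ, 0 < a →
    ∃ n₀ : ℕ,
      (∀ n : ℕ, n₀ ≤ n →
        a * ‖(-((T : ℂ) * (Real.pi : ℂ)) / ((T : ℂ)^2 * (ω n)^2 - (Real.pi : ℂ)^2))‖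
          ≤ Real.pi * ε / (T * γ^2 * (1 - ε)))
      ∧ Summable (fun n : ℕ =>
          ‖(-((T : ℂ) * (Real.pi : ℂ))
            / ((T : ℂ)^2 * (ω (n₀ + n))^2 - (Real.pi : ℂ)^2))‖)
      ∧ a * ∑' n : ℕ,
          ‖(-((T : ℂ) * (Real.pi : ℂ))
            / ((T : ℂ)^2 * (ω (n₀ + n))^2 - (Real.pi : ℂ)^2))‖
          ≤ Real.pi * ε / (T * γ^2 * (1 - ε)) := by
  rintro ε ⟨hε0, hε1⟩ T hT a ha
  have hT0 : 0 < T :=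
    lt_trans (div_pos (by positivity) (mul_pos hγ (Real.sqrt_pos.2 (by linarith)))) hT
  have hgap : ∀ᶠ n in atTop, γ / 2 ≤ (ω (n + 1)).re - (ω n).re :=
    (Real.eventually_lt_of_nonneg_lt_liminf (by positivity) (by linarith)).mono fun _ h => h.le
  have hgrowth : ∀ᶠ n : ℕ in atTop, γ / 2 / 2 * n ≤ ‖ω n‖ :=
    (eventually_mul_le_of_eventually_le_sub (by positivity) hgap).mono
      fun n h => h.trans (Complex.re_le_norm _)
  have hsum := summable_norm_div_mul_sq_sub (by positivity) hgrowth
    (a := -((T : ℂ) * Real.pi)) (b := (Real.pi : ℂ) ^ 2)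
    (pow_ne_zero 2 (Complex.ofReal_ne_zero.2 hT0.ne') : (T : ℂ) ^ 2 ≠ 0)
  have hbound : 0 < Real.pi * ε / (T * γ ^ 2 * (1 - ε)) / a := by
    have : 0 < 1 - ε := by linarith
    positivity
  obtain ⟨n₀, hterm, htail⟩ := exists_tail_tsum_le hsum (fun _ => norm_nonneg _) hbound
  refine ⟨n₀, fun n hn => ?_, hsum.comp_injective (add_right_injective n₀), ?_⟩
  · exact (le_div_iff₀' ha).1 (hterm n hn)
  · exact (le_div_iff₀' ha).1 htail
end

section
/- Let T > 0, let ω ∈ ℂ and ρ ∈ ℝ with T²ω² ≠ π² and T²(ω − iρ)² ≠ π², let C ∈ ℂ and R₁, R₂ ∈ ℝ, and let g(t) = sin(πt/T) on [0,T], g(t) = 0 otherwise. Then ∫₀^∞ g(t) ( C e^{iωt} + conj(C) e^{−i conj(ω) t} ) ( R₁ + R₂ e^{ρt} ) dt = 2 R₁ Re[ C (1 + e^{iωT}) G(ω) ] + 2 R₂ Re[ C (1 + e^{(iω + ρ)T}) G(ω − iρ) ], where G(w) = −Tπ/(T²w² − π²). -/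
/-! Since `g` vanishes beyond `T`, the integral lives on `[0, T]`, where the integrand is the real
part of `2 C sin(πt/T) (R₁ e^{iωt} + R₂ e^{i(ω - iρ)t})`. Writing the sine through exponentials,
`∫₀^T sin(πt/T) e^{iwt} dt = (1 + e^{iwT}) G(w)`: both exponentials `e^{i(w ± π/T)t}` take the value
`-e^{iwT}` at `t = T`, and the two resulting fractions combine into `G(w)`. -/

open MeasureTheory Complex Set
open scoped ComplexConjugate Real

theorem setIntegral_Ioi_eq_intervalIntegral_of_eq_zero {E : Type*} [NormedAddCommGroup E]
    [NormedSpace ℝ E] {f : ℝ → E} {a b : ℝ} (hab : a ≤ b) (hf : ∀ t, b < t → f t = 0) :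
    ∫ t in Ioi a, f t = ∫ t in a..b, f t := by
  rw [intervalIntegral.integral_of_le hab]
  exact setIntegral_eq_of_subset_of_forall_sdiff_eq_zero measurableSet_Ioi Ioc_subset_Ioi_self
    fun t ht => hf t (lt_of_not_ge fun htb => ht.2 ⟨ht.1, htb⟩)

theorem ofReal_sin_mul_cexp (b : ℝ) (w : ℂ) (t : ℝ) :
    (Real.sin (b * t) : ℂ) * cexp (I * w * t)
      = I / 2 * (cexp (I * (w - b) * t) - cexp (I * (w + b) * t)) := by
  rw [show I * (w - b) * t = -(b * t : ℝ) * I + I * w * t by push_cast; ring,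
    show I * (w + b) * t = (b * t : ℝ) * I + I * w * t by push_cast; ring,
    exp_add, exp_add, ofReal_sin, Complex.sin]
  ring

theorem integral_cexp_I_mul {c : ℂ} (hc : c ≠ 0) (T : ℝ) :
    ∫ t in (0 : ℝ)..T, cexp (I * c * t) = (cexp (I * c * T) - 1) / (I * c) := by
  simpa using integral_exp_mul_complex (a := 0) (b := T) (mul_ne_zero I_ne_zero hc)

theorem integral_sin_mul_cexp {T : ℝ} (hT : T ≠ 0) {w : ℂ} (hw : (T : ℂ) ^ 2 * w ^ 2 ≠ π ^ 2) :
    ∫ t in (0 : ℝ)..T, (Real.sin (π * t / T) : ℂ) * cexp (I * w * t)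
      = (1 + cexp (I * w * T)) * (-(T * π) / (T ^ 2 * w ^ 2 - π ^ 2)) := by
  have hT' : (T : ℂ) ≠ 0 := ofReal_ne_zero.mpr hT
  set b : ℝ := π / T
  have hbT : (b : ℂ) * T = π := by push_cast [b]; field_simp
  have hsq : (T : ℂ) ^ 2 * w ^ 2 - π ^ 2 = T ^ 2 * ((w - b) * (w + b)) := by
    rw [← hbT]; ring
  have hsub : w - b ≠ 0 := fun h => hw (sub_eq_zero.mp (by rw [hsq, h]; ring))
  have hadd : w + b ≠ 0 := fun h => hw (sub_eq_zero.mp (by rw [hsq, h]; ring))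
  have hexp_sub : cexp (I * (w - b) * T) = -cexp (I * w * T) := by
    rw [show I * (w - b) * T = I * w * T - π * I by linear_combination -I * hbT,
      exp_sub, exp_pi_mul_I]; ring
  have hexp_add : cexp (I * (w + b) * T) = -cexp (I * w * T) := by
    rw [show I * (w + b) * T = I * w * T + π * I by linear_combination I * hbT,
      exp_add, exp_pi_mul_I]; ring
  simp_rw [show ∀ t : ℝ, π * t / T = b * t from fun t => by ring, ofReal_sin_mul_cexp]
  rw [intervalIntegral.integral_const_mul, intervalIntegral.integral_sub
    (Continuous.intervalIntegrable (by fun_prop) _ _)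
    (Continuous.intervalIntegrable (by fun_prop) _ _),
    integral_cexp_I_mul hsub, integral_cexp_I_mul hadd, hexp_sub, hexp_add, hsq, ← hbT]
  field_simp
  ring

theorem re_mul_cexp_add_conj (C ω : ℂ) (t : ℝ) :
    (C * cexp (I * ω * t) + conj C * cexp (-I * conj ω * t)).re
      = 2 * (C * cexp (I * ω * t)).re := by
  have hconj : conj (C * cexp (I * ω * t)) = conj C * cexp (-I * conj ω * t) := by
    rw [map_mul, ← exp_conj]
    simp
  rw [← hconj, add_conj, ofReal_re]

theorem cexp_I_mul_sub_I_mul (ω : ℂ) (ρ t : ℝ) :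
    cexp (I * (ω - I * ρ) * t) = Real.exp (ρ * t) * cexp (I * ω * t) := by
  rw [ofReal_exp, ← exp_add]
  congr 1
  push_cast
  linear_combination -(ρ : ℂ) * t * I_sq

/-- Cross-term identity: for `T > 0`, `ω ∈ ℂ`, `ρ ∈ ℝ` with `T²ω² ≠ π²` and
`T²(ω - iρ)² ≠ π²`, `C ∈ ℂ`, `R₁, R₂ ∈ ℝ`, with `g(t) = sin(πt/T)` on `[0,T]`, `0` otherwise:
`∫₀^∞ g(t)(C e^{iωt} + conj(C) e^{-i conj(ω) t})(R₁ + R₂ e^{ρt}) dt`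
`= 2R₁ Re[C(1 + e^{iωT})G(ω)] + 2R₂ Re[C(1 + e^{(iω+ρ)T})G(ω - iρ)]`,
where `G(w) = -Tπ/(T²w² - π²)`. -/
theorem stmt9 (T : ℝ) (hT : 0 < T) (ω : ℂ) (ρ : ℝ)
    (hω : (T : ℂ)^2 * ω^2 ≠ (Real.pi : ℂ)^2)
    (hωρ : (T : ℂ)^2 * (ω - Complex.I * (ρ : ℂ))^2 ≠ (Real.pi : ℂ)^2)
    (C : ℂ) (R₁ R₂ : ℝ)
    (g : ℝ → ℝ)
    (hg : ∀ t : ℝ, g t = if t ∈ Set.Icc (0:ℝ) T then Real.sin (Real.pi * t / T) else 0)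
    (G : ℂ → ℂ)
    (hG : ∀ w : ℂ, G w = -((T : ℂ) * (Real.pi : ℂ)) / ((T : ℂ)^2 * w^2 - (Real.pi : ℂ)^2)) :
    (∫ t in Set.Ioi (0:ℝ),
        g t * (C * Complex.exp (Complex.I * ω * (t : ℂ))
            + (starRingEnd ℂ) C
              * Complex.exp (-Complex.I * (starRingEnd ℂ) ω * (t : ℂ))).re
          * (R₁ + R₂ * Real.exp (ρ * t)))
      = 2 * R₁ * (C * (1 + Complex.exp (Complex.I * ω * (T : ℂ))) * G ω).re
        + 2 * R₂ * (C * (1 + Complex.exp ((Complex.I * ω + (ρ : ℂ)) * (T : ℂ)))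
            * G (ω - Complex.I * (ρ : ℂ))).re := by
  have hshift : I * (ω - I * ρ) = I * ω + ρ := by linear_combination -(ρ : ℂ) * I_sq
  set F : ℝ → ℂ := fun t => 2 * C * (R₁ * ((Real.sin (π * t / T) : ℂ) * cexp (I * ω * t))
    + R₂ * ((Real.sin (π * t / T) : ℂ) * cexp (I * (ω - I * ρ) * t)))
  have hF : ∀ t ∈ uIcc 0 T, g t * (C * cexp (I * ω * t) + conj C * cexp (-I * conj ω * t)).re
      * (R₁ + R₂ * Real.exp (ρ * t)) = (F t).re := by
    intro t ht
    have hFt : F t = ((2 * Real.sin (π * t / T) * (R₁ + R₂ * Real.exp (ρ * t)) : ℝ) : ℂ)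
        * (C * cexp (I * ω * t)) := by
      simp only [F, cexp_I_mul_sub_I_mul]
      push_cast
      ring
    rw [uIcc_of_le hT.le] at ht
    rw [hFt, re_ofReal_mul, hg, if_pos ht, re_mul_cexp_add_conj]
    ring
  have hFint : ∫ t in (0 : ℝ)..T, F t
      = ((2 * R₁ : ℝ) : ℂ) * (C * (1 + cexp (I * ω * T)) * G ω)
        + ((2 * R₂ : ℝ) : ℂ) * (C * (1 + cexp ((I * ω + ρ) * T)) * G (ω - I * ρ)) := by
    simp only [F]
    rw [intervalIntegral.integral_const_mul, intervalIntegral.integral_add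
      (Continuous.intervalIntegrable (by fun_prop) _ _)
    (Continuous.intervalIntegrable (by fun_prop) _ _),
      intervalIntegral.integral_const_mul, intervalIntegral.integral_const_mul,
      integral_sin_mul_cexp hT.ne' hω, integral_sin_mul_cexp hT.ne' hωρ, ← hG, ← hG, hshift]
    push_cast
    ring
  have hre : ∫ t in (0 : ℝ)..T, (F t).re = (∫ t in (0 : ℝ)..T, F t).re := by
    simpa using intervalIntegral.intervalIntegral_re (Continuous.intervalIntegrable
      (show Continuous F by fun_prop) 0 T)
  rw [setIntegral_Ioi_eq_intervalIntegral_of_eq_zero hT.le fun t ht => by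
      rw [hg, if_neg fun h => ht.not_ge h.2, zero_mul, zero_mul],
    intervalIntegral.integral_congr hF, hre, hFint, add_re, re_ofReal_mul, re_ofReal_mul]
end

section
/- Let ω : ℕ → ℂ satisfy liminf_{n→∞}(Re ω_{n+1} − Re ω_n) = γ > 0 and lim_{n→∞} Im ω_n = α_ω with α_ω > 0; let {C_n} ⊂ ℂ with Σ|C_n|² < ∞, and let {R_{1,n}} ⊂ ℝ satisfy |R_{1,n}| ≤ (M/n^ν)|C_n| for all n, for some ν > 1/2 and M > 0. Then for every ε ∈ (0,1) and every T > 2π/(γ√(1−ε)) there exists n₀ ∈ ℕ such that Σ_{n,m ≥ n₀} |R_{1,m}| |C_n| (1 + e^{−Im ω_n · T}) |G(ω_n)| ≤ (2πε/(Tγ²(1−ε))) Σ_{n ≥ n₀} |C_n|² (1 + e^{−2 Im ω_n T}), where G(w) = −Tπ/(T²w² − π²). -/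
set_option maxHeartbeats 1000000

open Filter

private lemma summable_shift {h : ℕ → ℝ} (hs : Summable h) (k : ℕ) :
    Summable fun n => h (k + n) :=
  ((summable_nat_add_iff k).2 hs).congr fun n => by rw [add_comm]

private lemma tsum_cs {f g : ℕ → ℝ} (hf : ∀ n, 0 ≤ f n) (hg : ∀ n, 0 ≤ g n)
    (hf2 : Summable fun n => (f n) ^ 2) (hg2 : Summable fun n => (g n) ^ 2) :
    Summable (fun n => f n * g n) ∧
      ∑' n, f n * g n ≤ Real.sqrt (∑' n, (f n) ^ 2) * Real.sqrt (∑' n, (g n) ^ 2) := by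
  have hsum : Summable fun n => f n * g n := by
    refine (hf2.add hg2).of_nonneg_of_le (fun n => mul_nonneg (hf n) (hg n)) fun n => ?_
    nlinarith [sq_nonneg (f n - g n)]
  refine ⟨hsum, hsum.tsum_le_of_sum_le fun s => ?_⟩
  have h0f : 0 ≤ ∑' n, (f n) ^ 2 := tsum_nonneg fun n => sq_nonneg _
  have h1 : (∑ i ∈ s, f i * g i) ^ 2 ≤ (∑' n, (f n) ^ 2) * (∑' n, (g n) ^ 2) := by
    refine le_trans (Finset.sum_mul_sq_le_sq_mul_sq s f g) ?_
    have hsf := hf2.sum_le_tsum s (fun i _ => sq_nonneg (f i))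
    have hsg := hg2.sum_le_tsum s (fun i _ => sq_nonneg (g i))
    have hf0 : (0:ℝ) ≤ ∑ i ∈ s, (f i) ^ 2 := Finset.sum_nonneg fun i _ => sq_nonneg _
    have hg0 : (0:ℝ) ≤ ∑ i ∈ s, (g i) ^ 2 := Finset.sum_nonneg fun i _ => sq_nonneg _
    nlinarith
  have h2 : 0 ≤ ∑ i ∈ s, f i * g i := Finset.sum_nonneg fun i _ => mul_nonneg (hf i) (hg i)
  calc ∑ i ∈ s, f i * g i = Real.sqrt ((∑ i ∈ s, f i * g i) ^ 2) := (Real.sqrt_sq h2).symm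
    _ ≤ Real.sqrt ((∑' n, (f n) ^ 2) * (∑' n, (g n) ^ 2)) := Real.sqrt_le_sqrt h1
    _ = _ := Real.sqrt_mul h0f _

private lemma tail_small {h : ℕ → ℝ} (hs : Summable h) {δ : ℝ} (hδ : 0 < δ) :
    ∃ N : ℕ, ∀ n₀ ≥ N, ∑' k, h (n₀ + k) ≤ δ := by
  have ht := tendsto_sum_nat_add h
  have h2 := ht.eventually (gt_mem_nhds hδ)
  rw [eventually_atTop] at h2
  obtain ⟨N, hN⟩ := h2
  refine ⟨N, fun n₀ hn₀ => ?_⟩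
  calc ∑' k, h (n₀ + k) = ∑' k, h (k + n₀) := tsum_congr fun k => by rw [add_comm]
    _ ≤ δ := (hN n₀ hn₀).le

/-- Double-sum estimate (eqn `mistisin0`): with the gap condition, `Im ω_n → α_ω > 0`,
`Σ|C_n|² < ∞` and `|R_{1,n}| ≤ (M/n^ν)|C_n|` (`ν > 1/2`, `M > 0`), for every `ε ∈ (0,1)` and
`T > 2π/(γ√(1-ε))` there exists `n₀` such that
`Σ_{n,m≥n₀} |R_{1,m}||C_n|(1 + e^{-Im ω_n T})|G(ω_n)|`
`≤ (2πε/(Tγ²(1-ε))) Σ_{n≥n₀} |C_n|²(1 + e^{-2 Im ω_n T})`,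
where `G(w) = -Tπ/(T²w² - π²)`. -/
theorem stmt10 (ω : ℕ → ℂ) (γ αω : ℝ) (ν M : ℝ)
    (hγ : 0 < γ) (hαω : 0 < αω) (hν : 1/2 < ν) (hM : 0 < M)
    (hlim : Filter.atTop.liminf (fun n : ℕ => (ω (n + 1)).re - (ω n).re) = γ)
    (hIm : Filter.Tendsto (fun n : ℕ => (ω n).im) Filter.atTop (nhds αω))
    (C : ℕ → ℂ) (R₁ : ℕ → ℝ)
    (hC : Summable (fun n : ℕ => ‖C n‖^2))
    (hR : ∀ n : ℕ, 1 ≤ n → |R₁ n| ≤ M / (n : ℝ)^ν * ‖C n‖) :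
    ∀ ε ∈ Set.Ioo (0:ℝ) 1, ∀ T : ℝ, T > 2 * Real.pi / (γ * Real.sqrt (1 - ε)) →
    ∃ n₀ : ℕ,
      (∑' n : ℕ, ∑' m : ℕ,
          |R₁ (n₀ + m)| * ‖C (n₀ + n)‖ * (1 + Real.exp (-(ω (n₀ + n)).im * T))
            * ‖(-((T : ℂ) * (Real.pi : ℂ))
                / ((T : ℂ)^2 * (ω (n₀ + n))^2 - (Real.pi : ℂ)^2))‖)
        ≤ (2 * Real.pi * ε / (T * γ^2 * (1 - ε)))
            * ∑' n : ℕ, ‖C (n₀ + n)‖^2 * (1 + Real.exp (-2 * (ω (n₀ + n)).im * T)) := by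
  intro ε hε T hT
  obtain ⟨hε0, hε1⟩ := hε
  have hπ := Real.pi_pos
  have hsq : 0 < Real.sqrt (1 - ε) := Real.sqrt_pos.2 (by linarith)
  have hT0 : 0 < T := lt_trans (by positivity) hT
  set K := 2 * Real.pi * ε / (T * γ ^ 2 * (1 - ε)) with hKdef
  have hK : 0 < K :=
    div_pos (by positivity) (mul_pos (mul_pos hT0 (by positivity)) (by linarith))
  -- eventual gap bound
  have hsup : sSup {a : ℝ | ∀ᶠ n in atTop, a ≤ (ω (n + 1)).re - (ω n).re} = γ := by
    rw [← hlim, Filter.liminf_eq]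
  have hne : {a : ℝ | ∀ᶠ n in atTop, a ≤ (ω (n + 1)).re - (ω n).re}.Nonempty := by
    rcases Set.eq_empty_or_nonempty
      {a : ℝ | ∀ᶠ n in atTop, a ≤ (ω (n + 1)).re - (ω n).re} with h | h
    · rw [h, Real.sSup_empty] at hsup; linarith
    · exact h
  obtain ⟨a, ha, hga⟩ := exists_lt_of_lt_csSup (b := γ/2) hne (by rw [hsup]; linarith)
  obtain ⟨N₀, hN₀⟩ := eventually_atTop.1 (ha.mono fun n hn => le_trans hga.le hn)
  -- growth of real parts
  have hgrow : ∀ n, N₀ ≤ n → (ω N₀).re + γ/2 * ((n:ℝ) - (N₀:ℝ)) ≤ (ω n).re := by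
    intro n hn
    induction n, hn using Nat.le_induction with
    | base => simp
    | succ n hn ih =>
      have h1 : γ/2 ≤ (ω (n+1)).re - (ω n).re := hN₀ n hn
      push_cast
      push_cast at ih
      linarith
  obtain ⟨N₁', hN₁'⟩ := exists_nat_ge
    (max ((4/γ) * (γ/2 * (N₀:ℝ) - (ω N₀).re)) (8*Real.pi/(γ*T)))
  have hN₁'a : (4/γ) * (γ/2 * (N₀:ℝ) - (ω N₀).re) ≤ (N₁':ℝ) :=
    le_trans (le_max_left _ _) hN₁'
  have hN₁'b : 8*Real.pi/(γ*T) ≤ (N₁':ℝ) := le_trans (le_max_right _ _) hN₁'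
  set N₁ := max (max N₀ 1) N₁' with hN₁def
  set B := 32 * Real.pi / (T * γ^2) with hBdef
  have hB0 : 0 < B := by positivity
  -- pointwise bound on |G(ω n)| for n ≥ N₁
  have hGle : ∀ n, N₁ ≤ n →
      ‖(-((T : ℂ) * (Real.pi : ℂ))
          / ((T : ℂ)^2 * (ω n)^2 - (Real.pi : ℂ)^2))‖ ≤ B / (n:ℝ)^2 := by
    intro n hn
    have hnN₀ : N₀ ≤ n := le_trans (le_trans (le_max_left _ _) (le_max_left _ _)) hn
    have hn1 : 1 ≤ n := le_trans (le_trans (le_max_right _ _) (le_max_left _ _)) hn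
    have hnr : (N₁':ℝ) ≤ (n:ℝ) := by exact_mod_cast le_trans (le_max_right _ _) hn
    have hn0 : (0:ℝ) < (n:ℝ) := by exact_mod_cast hn1
    have hre : γ/4 * (n:ℝ) ≤ (ω n).re := by
      have h1 := hgrow n hnN₀
      have h2 : (4/γ) * (γ/2 * (N₀:ℝ) - (ω N₀).re) ≤ (n:ℝ) := le_trans hN₁'a hnr
      have h4 : (γ/4) * ((4/γ) * (γ/2 * (N₀:ℝ) - (ω N₀).re))
          = γ/2 * (N₀:ℝ) - (ω N₀).re := by field_simp
      have h5 := mul_le_mul_of_nonneg_left h2 (by positivity : (0:ℝ) ≤ γ/4)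
      rw [h4] at h5
      linarith
    set aω := ‖ω n‖ with haω
    have habs : γ/4 * (n:ℝ) ≤ aω := le_trans hre (Complex.re_le_norm (ω n))
    have haω0 : 0 < aω := lt_of_lt_of_le (by positivity) habs
    have hTa : 2 * Real.pi ≤ T * aω := by
      have h6 : 8 * Real.pi / (γ*T) ≤ (n:ℝ) := le_trans hN₁'b hnr
      rw [div_le_iff₀ (mul_pos hγ hT0)] at h6
      nlinarith [mul_le_mul_of_nonneg_left habs hT0.le]
    have hden : T^2 * aω^2 / 2 ≤
        ‖((T:ℂ)^2 * (ω n)^2 - (Real.pi:ℂ)^2)‖ := by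
      have h8 : ‖((T:ℂ)^2 * (ω n)^2)‖ - ‖((Real.pi:ℂ)^2)‖ ≤
          ‖((T:ℂ)^2 * (ω n)^2 - (Real.pi:ℂ)^2)‖ := by
        have h8' := norm_sub_norm_le ((T:ℂ)^2 * (ω n)^2) ((Real.pi:ℂ)^2)
        exact h8'
      have h9 : ‖((T:ℂ)^2 * (ω n)^2)‖ = T^2 * aω^2 := by
        rw [norm_mul, norm_pow, norm_pow, Complex.norm_real, Real.norm_eq_abs, abs_of_pos hT0, haω]
      have h10 : ‖((Real.pi:ℂ)^2)‖ = Real.pi^2 := by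
        rw [norm_pow, Complex.norm_real, Real.norm_eq_abs, abs_of_pos Real.pi_pos]
      rw [h9, h10] at h8
      nlinarith [mul_le_mul hTa hTa (by positivity) (mul_pos hT0 haω0).le, Real.pi_pos]
    have hdenpos : 0 < ‖((T:ℂ)^2 * (ω n)^2 - (Real.pi:ℂ)^2)‖ :=
      lt_of_lt_of_le (by positivity) hden
    have hGGeq : ‖(-((T : ℂ) * (Real.pi : ℂ))
          / ((T : ℂ)^2 * (ω n)^2 - (Real.pi : ℂ)^2))‖
        = T * Real.pi / ‖((T:ℂ)^2 * (ω n)^2 - (Real.pi:ℂ)^2)‖ := by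
      rw [norm_div, norm_neg, norm_mul, Complex.norm_real, Complex.norm_real, Real.norm_eq_abs,
        Real.norm_eq_abs, abs_of_pos hT0, abs_of_pos Real.pi_pos]
    rw [hGGeq, div_le_div_iff₀ hdenpos (by positivity : (0:ℝ) < (n:ℝ)^2)]
    have h12 : B * (T^2 * γ^2 * (n:ℝ)^2 / 32) = Real.pi * T * (n:ℝ)^2 := by
      rw [hBdef]; field_simp
    have h13 : T^2*γ^2*(n:ℝ)^2/32 ≤ T^2 * aω^2 / 2 := by
      nlinarith [mul_le_mul habs habs (by positivity) haω0.le, sq_nonneg T]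
    calc T * Real.pi * (n:ℝ)^2 = B * (T^2*γ^2*(n:ℝ)^2/32) := by rw [h12]; ring
      _ ≤ B * ‖((T:ℂ)^2 * (ω n)^2 - (Real.pi:ℂ)^2)‖ :=
          mul_le_mul_of_nonneg_left (le_trans h13 hden) hB0.le
  -- summability of |G(ω ·)|²
  have hGsum : Summable (fun k : ℕ => (‖(-((T : ℂ) * (Real.pi : ℂ))
      / ((T : ℂ)^2 * (ω k)^2 - (Real.pi : ℂ)^2))‖)^2) := by
    rw [← summable_nat_add_iff N₁]
    have hbase : Summable fun k : ℕ => B^2 * (1/((k:ℝ))^4) :=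
      (Real.summable_one_div_nat_pow.2 (by norm_num)).mul_left _
    have hb2 := (summable_nat_add_iff N₁).2 hbase
    refine Summable.of_nonneg_of_le (fun k => sq_nonneg _) (fun k => ?_) hb2
    have hkN : N₁ ≤ k + N₁ := Nat.le_add_left _ _
    have h1N : 1 ≤ N₁ := le_trans (le_max_right _ _) (le_max_left _ _)
    have hpos : (0:ℝ) < ((k+N₁:ℕ):ℝ) := by
      exact_mod_cast Nat.lt_of_lt_of_le Nat.zero_lt_one (le_trans h1N hkN)
    have h2 : (‖(-((T : ℂ) * (Real.pi : ℂ))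
        / ((T : ℂ)^2 * (ω (k+N₁))^2 - (Real.pi : ℂ)^2))‖)^2
        ≤ (B/((k+N₁:ℕ):ℝ)^2)^2 :=
      pow_le_pow_left₀ (norm_nonneg _) (hGle (k+N₁) hkN) 2
    refine h2.trans_eq ?_
    rw [div_pow, ← pow_mul]
    norm_num [mul_one_div, div_eq_mul_inv]
  -- bound on the exponential factor
  have htend : Tendsto (fun n => Real.exp (-2 * (ω n).im * T)) atTop
      (nhds (Real.exp (-2 * αω * T))) :=
    (Real.continuous_exp.tendsto _).comp ((hIm.const_mul (-2)).mul_const T)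
  obtain ⟨Bexp, hBexpub⟩ := htend.bddAbove_range
  have hBexp : ∀ n, Real.exp (-2*(ω n).im*T) ≤ Bexp := fun n => hBexpub ⟨n, rfl⟩
  have hBexp0 : 0 < Bexp := lt_of_lt_of_le (Real.exp_pos _) (hBexp 0)
  -- summability of (M/n^ν)²
  have h1sum : Summable (fun k : ℕ => (M/(k:ℝ)^ν)^2) := by
    have hbase : Summable (fun k : ℕ => M^2 * (1/(k:ℝ)^(ν*2))) :=
      (Real.summable_one_div_nat_rpow.2 (by linarith)).mul_left _
    refine hbase.congr fun k => ?_
    rw [div_pow, ← Real.rpow_natCast ((k:ℝ)^ν) 2, ← Real.rpow_mul (Nat.cast_nonneg k)]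
    norm_num [mul_one_div, div_eq_mul_inv]
  -- choose n₀
  obtain ⟨N₂, hN₂⟩ := tail_small h1sum (show (0:ℝ) < K^2 by positivity)
  obtain ⟨N₃, hN₃⟩ := tail_small hGsum (show (0:ℝ) < 1/4 by norm_num)
  refine ⟨max 1 (max N₂ N₃), ?_⟩
  set n₀ := max 1 (max N₂ N₃) with hn₀def
  have hn₀1 : 1 ≤ n₀ := le_max_left _ _
  have ht1 : ∑' k, (M/(((n₀+k:ℕ)):ℝ)^ν)^2 ≤ K^2 :=
    hN₂ n₀ (le_trans (le_max_left _ _) (le_max_right _ _))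
  have ht2 : ∑' k, (‖(-((T : ℂ) * (Real.pi : ℂ))
      / ((T : ℂ)^2 * (ω (n₀+k))^2 - (Real.pi : ℂ)^2))‖)^2 ≤ 1/4 :=
    hN₃ n₀ (le_trans (le_max_right _ _) (le_max_right _ _))
  -- names
  set SC := ∑' n : ℕ, ‖C (n₀ + n)‖^2 * (1 + Real.exp (-2 * (ω (n₀ + n)).im * T)) with hSCdef
  have hCs : Summable fun n => ‖C (n₀+n)‖^2 := summable_shift hC n₀
  have hSCs : Summable fun n : ℕ =>
      ‖C (n₀ + n)‖^2 * (1 + Real.exp (-2 * (ω (n₀ + n)).im * T)) := by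
    refine Summable.of_nonneg_of_le (fun n => by positivity) (fun n => ?_)
      (hCs.mul_left (1+Bexp))
    have := hBexp (n₀+n)
    nlinarith [sq_nonneg ‖C (n₀+n)‖]
  have hSC0 : 0 ≤ SC := tsum_nonneg fun n => by positivity
  -- Cauchy–Schwarz on the m-sum
  have hf1sh : Summable fun m => (M/(((n₀+m:ℕ)):ℝ)^ν)^2 := summable_shift h1sum n₀
  obtain ⟨hCS1s, hCS1⟩ := tsum_cs (f := fun m => M/(((n₀+m:ℕ)):ℝ)^ν)
    (g := fun m => ‖C (n₀+m)‖) (fun m => by positivity) (fun m => norm_nonneg _)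
    hf1sh hCs
  have hRsum : Summable fun m => |R₁ (n₀+m)| := by
    refine Summable.of_nonneg_of_le (fun m => abs_nonneg _) (fun m => ?_) hCS1s
    exact hR (n₀+m) (le_trans hn₀1 (Nat.le_add_right _ _))
  have hSg : (∑' m, |R₁ (n₀+m)|) ≤
      Real.sqrt (∑' m, (M/(((n₀+m:ℕ)):ℝ)^ν)^2) * Real.sqrt (∑' m, ‖C (n₀+m)‖^2) := by
    refine le_trans (hRsum.tsum_le_tsum (fun m => ?_) hCS1s) hCS1
    exact hR (n₀+m) (le_trans hn₀1 (Nat.le_add_right _ _))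
  have hS2le : (∑' m, ‖C (n₀+m)‖^2) ≤ SC := by
    refine hCs.tsum_le_tsum (fun m => ?_) hSCs
    have := Real.exp_pos (-2 * (ω (n₀ + m)).im * T)
    nlinarith [sq_nonneg ‖C (n₀+m)‖]
  -- Cauchy–Schwarz on the n-sum
  have hexp_sq : ∀ n : ℕ, Real.exp (-(ω (n₀+n)).im*T)^2
      = Real.exp (-2*(ω (n₀+n)).im*T) := by
    intro n; rw [sq, ← Real.exp_add]; congr 1; ring
  have hAE2 : Summable fun n =>
      ((‖C (n₀+n)‖ * (1 + Real.exp (-(ω (n₀+n)).im * T))))^2 := by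
    refine Summable.of_nonneg_of_le (fun n => sq_nonneg _) (fun n => ?_)
      (hCs.mul_left (2*(1+Bexp)))
    have h1 := hexp_sq n
    have h2 : Real.exp (-(ω (n₀+n)).im*T)^2 ≤ Bexp := h1.le.trans (hBexp (n₀+n))
    nlinarith [sq_nonneg (‖C (n₀+n)‖ * (1 - Real.exp (-(ω (n₀+n)).im*T))),
      mul_nonneg (sq_nonneg ‖C (n₀+n)‖) (sub_nonneg.2 h2)]
  have hGsh : Summable fun n => (‖(-((T : ℂ) * (Real.pi : ℂ))
      / ((T : ℂ)^2 * (ω (n₀+n))^2 - (Real.pi : ℂ)^2))‖)^2 := summable_shift hGsum n₀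
  obtain ⟨hCS2s, hCS2⟩ := tsum_cs
    (f := fun n => ‖C (n₀+n)‖ * (1 + Real.exp (-(ω (n₀+n)).im * T)))
    (g := fun n => ‖(-((T : ℂ) * (Real.pi : ℂ))
      / ((T : ℂ)^2 * (ω (n₀+n))^2 - (Real.pi : ℂ)^2))‖)
    (fun n => mul_nonneg (norm_nonneg _) (by positivity))
    (fun n => norm_nonneg _) hAE2 hGsh
  have hSAE2 : (∑' n, ((‖C (n₀+n)‖ * (1 + Real.exp (-(ω (n₀+n)).im * T))))^2)
      ≤ 2 * SC := by
    have hstep : (∑' n, ((‖C (n₀+n)‖ * (1 + Real.exp (-(ω (n₀+n)).im * T))))^2)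
        ≤ ∑' n, 2 * (‖C (n₀ + n)‖^2 * (1 + Real.exp (-2 * (ω (n₀ + n)).im * T))) := by
      refine hAE2.tsum_le_tsum (fun n => ?_) (hSCs.mul_left 2)
      have h1 := hexp_sq n
      nlinarith [sq_nonneg (‖C (n₀+n)‖ * (1 - Real.exp (-(ω (n₀+n)).im*T)))]
    exact hstep.trans_eq tsum_mul_left
  -- rewrite LHS as a product
  have hrw : (∑' n : ℕ, ∑' m : ℕ,
        |R₁ (n₀ + m)| * ‖C (n₀ + n)‖ * (1 + Real.exp (-(ω (n₀ + n)).im * T))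
          * ‖(-((T : ℂ) * (Real.pi : ℂ))
              / ((T : ℂ)^2 * (ω (n₀ + n))^2 - (Real.pi : ℂ)^2))‖)
      = (∑' m, |R₁ (n₀+m)|) *
        (∑' n, ‖C (n₀+n)‖ * (1 + Real.exp (-(ω (n₀+n)).im * T))
          * ‖(-((T : ℂ) * (Real.pi : ℂ))
              / ((T : ℂ)^2 * (ω (n₀+n))^2 - (Real.pi : ℂ)^2))‖) := by
    rw [← tsum_mul_left]
    refine tsum_congr fun n => ?_
    rw [← tsum_mul_right]
    exact tsum_congr fun m => by ring
  rw [hrw]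
  -- assemble
  have hSc : (∑' n, ‖C (n₀+n)‖ * (1 + Real.exp (-(ω (n₀+n)).im * T))
        * ‖(-((T : ℂ) * (Real.pi : ℂ))
            / ((T : ℂ)^2 * (ω (n₀+n))^2 - (Real.pi : ℂ)^2))‖)
      ≤ Real.sqrt (2*SC) * Real.sqrt (1/4) := by
    refine le_trans hCS2 (mul_le_mul (Real.sqrt_le_sqrt hSAE2)
      (Real.sqrt_le_sqrt ht2) (Real.sqrt_nonneg _) (Real.sqrt_nonneg _))
  have hSg' : (∑' m, |R₁ (n₀+m)|) ≤ Real.sqrt (K^2) * Real.sqrt SC :=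
    le_trans hSg (mul_le_mul (Real.sqrt_le_sqrt ht1)
      (Real.sqrt_le_sqrt hS2le) (Real.sqrt_nonneg _) (Real.sqrt_nonneg _))
  have hScnn : 0 ≤ ∑' n, ‖C (n₀+n)‖ * (1 + Real.exp (-(ω (n₀+n)).im * T))
        * ‖(-((T : ℂ) * (Real.pi : ℂ))
            / ((T : ℂ)^2 * (ω (n₀+n))^2 - (Real.pi : ℂ)^2))‖ :=
    tsum_nonneg fun n => mul_nonneg (mul_nonneg (norm_nonneg _) (by positivity))
      (norm_nonneg _)
  have hmain : (∑' m, |R₁ (n₀+m)|) *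
      (∑' n, ‖C (n₀+n)‖ * (1 + Real.exp (-(ω (n₀+n)).im * T))
        * ‖(-((T : ℂ) * (Real.pi : ℂ))
            / ((T : ℂ)^2 * (ω (n₀+n))^2 - (Real.pi : ℂ)^2))‖)
      ≤ (Real.sqrt (K^2) * Real.sqrt SC) * (Real.sqrt (2*SC) * Real.sqrt (1/4)) :=
    mul_le_mul hSg' hSc hScnn (by positivity)
  refine le_trans hmain ?_
  have e1 : Real.sqrt (K^2) = K := Real.sqrt_sq hK.le
  have e2 : Real.sqrt (1/4) = 1/2 := by
    rw [show (1/4:ℝ) = (1/2)^2 by norm_num]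
    exact Real.sqrt_sq (by norm_num)
  have e3 : Real.sqrt (2*SC) ≤ 2 * Real.sqrt SC := by
    rw [Real.sqrt_mul (by norm_num : (0:ℝ) ≤ 2)]
    have h2 : Real.sqrt 2 ≤ 2 := by
      nlinarith [Real.sq_sqrt (by norm_num : (0:ℝ) ≤ 2), Real.sqrt_nonneg 2]
    exact mul_le_mul_of_nonneg_right h2 (Real.sqrt_nonneg _)
  calc (Real.sqrt (K^2) * Real.sqrt SC) * (Real.sqrt (2*SC) * Real.sqrt (1/4))
      ≤ (K * Real.sqrt SC) * ((2 * Real.sqrt SC) * (1/2)) := by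
        rw [e1, e2]
        exact mul_le_mul_of_nonneg_left
          (mul_le_mul_of_nonneg_right e3 (by norm_num)) (by positivity)
    _ = K * (Real.sqrt SC * Real.sqrt SC) := by ring
    _ = K * SC := by rw [Real.mul_self_sqrt hSC0]
end

section
/- Let b₁, b₂ > 0, K > 0, and let λ : ℕ → ℝ be a sequence of positive numbers with λ_n → ∞. Let {u_{0n}}, {u_{1n}} be real sequences and let {C_n} ⊂ ℂ satisfy C_n = u_{0n}/2 − (i/4)((b₁+b₂) u_{0n} + 2 u_{1n})/√λ_n + E_n, where |E_n| ≤ K(|u_{0n}| + |u_{1n}|)/λ_n for every n. Then there exist constants c₁, c₂ > 0 and n₁ ∈ ℕ (depending only on b₁, b₂, K and λ) such that for all n ≥ n₁: c₁ (λ_n u_{0n}² + u_{1n}²) ≤ λ_n |C_n|² ≤ c₂ (λ_n u_{0n}² + u_{1n}²). -/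
set_option maxHeartbeats 1000000 in
/-- Coefficient equivalence (eqn `ine101bis`, asymptotic form): if
`C_n = u_{0n}/2 - (i/4)((b₁+b₂)u_{0n} + 2u_{1n})/√λ_n + E_n` with
`|E_n| ≤ K(|u_{0n}| + |u_{1n}|)/λ_n` and `λ_n → ∞`, `λ_n > 0`, then there exist
`c₁, c₂ > 0` and `n₁ ∈ ℕ` depending only on `b₁, b₂, K` and `λ` such that for `n ≥ n₁`:
`c₁(λ_n u_{0n}² + u_{1n}²) ≤ λ_n |C_n|² ≤ c₂(λ_n u_{0n}² + u_{1n}²)`. -/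
theorem stmt12 (b₁ b₂ K : ℝ) (hb₁ : 0 < b₁) (hb₂ : 0 < b₂) (hK : 0 < K)
    (lam : ℕ → ℝ) (hlam_pos : ∀ n, 0 < lam n)
    (hlam : Filter.Tendsto lam Filter.atTop Filter.atTop) :
    ∃ c₁ c₂ : ℝ, 0 < c₁ ∧ 0 < c₂ ∧ ∃ n₁ : ℕ,
      ∀ (u₀ u₁ : ℕ → ℝ) (C E : ℕ → ℂ),
        (∀ n : ℕ, C n = (u₀ n : ℂ) / 2
            - Complex.I / 4 * (((b₁ + b₂) * u₀ n + 2 * u₁ n : ℝ) : ℂ)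
                / (Real.sqrt (lam n) : ℂ)
            + E n) →
        (∀ n : ℕ, ‖E n‖ ≤ K * (|u₀ n| + |u₁ n|) / lam n) →
        ∀ n : ℕ, n₁ ≤ n →
          c₁ * (lam n * (u₀ n)^2 + (u₁ n)^2) ≤ lam n * ‖C n‖^2
          ∧ lam n * ‖C n‖^2 ≤ c₂ * (lam n * (u₀ n)^2 + (u₁ n)^2) := by
  obtain ⟨M, hM⟩ : ∃ M : ℝ, M = 1 + (b₁ + b₂) + K := ⟨_, rfl⟩
  have hM1 : 1 ≤ M := by rw [hM]; linarith
  obtain ⟨T, hT⟩ : ∃ T : ℝ, T = max 1 (max (16 * K) (2 * (b₁ + b₂))) := ⟨_, rfl⟩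
  have hT1 : (1:ℝ) ≤ T := hT ▸ le_max_left _ _
  have hTK : 16 * K ≤ T := hT ▸ le_trans (le_max_left _ _) (le_max_right _ _)
  have hTb : 2 * (b₁ + b₂) ≤ T := hT ▸ le_trans (le_max_right _ _) (le_max_right _ _)
  obtain ⟨n₁, hn₁⟩ := Filter.eventually_atTop.mp (hlam.eventually_ge_atTop (T ^ 2))
  refine ⟨1/64, 2 * M ^ 2, by norm_num, by nlinarith, n₁, ?_⟩
  intro u₀ u₁ C E hC hE n hn
  have hln := hn₁ n hn
  obtain ⟨s, hsdef⟩ : ∃ s : ℝ, s = Real.sqrt (lam n) := ⟨_, rfl⟩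
  have hs0 : 0 < s := hsdef ▸ Real.sqrt_pos.mpr (hlam_pos n)
  have hs2 : s ^ 2 = lam n := hsdef ▸ Real.sq_sqrt (hlam_pos n).le
  have hTs : T ≤ s := by
    have h := Real.sqrt_le_sqrt hln
    rw [Real.sqrt_sq (le_trans zero_le_one hT1)] at h
    rw [hsdef]; exact h
  have hs1 : (1:ℝ) ≤ s := le_trans hT1 hTs
  have hsK : 16 * K ≤ s := le_trans hTK hTs
  have hsb : 2 * (b₁ + b₂) ≤ s := le_trans hTb hTs
  obtain ⟨a, ha⟩ : ∃ a : ℝ, a = |u₀ n| := ⟨_, rfl⟩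
  obtain ⟨b, hb⟩ : ∃ b : ℝ, b = |u₁ n| := ⟨_, rfl⟩
  have ha0 : 0 ≤ a := ha ▸ abs_nonneg _
  have hb0 : 0 ≤ b := hb ▸ abs_nonneg _
  obtain ⟨v, hv⟩ : ∃ v : ℝ, v = (b₁ + b₂) * u₀ n + 2 * u₁ n := ⟨_, rfl⟩
  obtain ⟨A, hA⟩ : ∃ A : ℂ, A = (u₀ n : ℂ) / 2 - Complex.I / 4 * ((v : ℝ) : ℂ) / (s : ℂ) := ⟨_, rfl⟩
  have hsne : (s : ℂ) ≠ 0 := by exact_mod_cast hs0.ne'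
  have hAeq : A = ((u₀ n / 2 : ℝ) : ℂ) + ((-(v / (4 * s)) : ℝ) : ℂ) * Complex.I := by
    rw [hA]; push_cast; field_simp; ring
  have key : ∀ x y : ℝ, ((x:ℂ) + (y:ℂ) * Complex.I).re = x ∧
      ((x:ℂ) + (y:ℂ) * Complex.I).im = y := by
    intro x y; constructor <;> simp
  have hAre : A.re = u₀ n / 2 := by rw [hAeq]; exact (key _ _).1
  have hAim : A.im = -(v / (4 * s)) := by rw [hAeq]; exact (key _ _).2
  have hx : |u₀ n / 2| = a / 2 := by rw [ha, abs_div]; norm_num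
  have hy : |(-(v / (4 * s)))| = |v| / (4 * s) := by
    rw [abs_neg, abs_div, abs_of_pos (by linarith : (0:ℝ) < 4 * s)]
  have habsA_up : ‖A‖ ≤ a / 2 + |v| / (4 * s) := by
    have h := Complex.norm_le_abs_re_add_abs_im A
    rw [hAre, hAim, hx, hy] at h
    exact h
  have habsA_lo : (a / 2 + |v| / (4 * s)) / 2 ≤ ‖A‖ := by
    have h1 := Complex.abs_re_le_norm A
    have h2 := Complex.abs_im_le_norm A
    rw [hAre, hx] at h1
    rw [hAim, hy] at h2
    linarith
  have hCA : C n = A + E n := by rw [hC n, hA, hv, hsdef]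
  have hkey : |‖C n‖ - ‖A‖| ≤ ‖E n‖ := by
    have h : E n = C n - A := by rw [hCA]; ring
    rw [h]
    exact abs_norm_sub_norm_le (C n) A
  obtain ⟨hk1, hk2⟩ := abs_le.mp hkey
  have hE' : ‖E n‖ ≤ K * (a + b) / s ^ 2 := by
    rw [ha, hb, hs2]; exact hE n
  have haC0 : 0 ≤ ‖C n‖ := norm_nonneg _
  have haE0 : 0 ≤ ‖E n‖ := norm_nonneg _
  -- bounds on |v|
  have h1 : |(b₁ + b₂) * u₀ n| = (b₁ + b₂) * a := by
    rw [ha, abs_mul, abs_of_pos (by linarith : (0:ℝ) < b₁ + b₂)]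
  have h2 : |(2:ℝ) * u₁ n| = 2 * b := by rw [hb, abs_mul]; norm_num
  have hv_up : |v| ≤ (b₁ + b₂) * a + 2 * b := by
    have h3 := abs_add_le ((b₁ + b₂) * u₀ n) (2 * u₁ n)
    rw [h1, h2] at h3
    rw [hv]; exact h3
  have hv_lo : 2 * b - (b₁ + b₂) * a ≤ |v| := by
    have heq : (2:ℝ) * u₁ n = v - (b₁ + b₂) * u₀ n := by rw [hv]; ring
    have := abs_sub v ((b₁ + b₂) * u₀ n)
    rw [← heq, h1, h2] at this
    linarith
  have hvnn : 0 ≤ |v| := abs_nonneg _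
  -- scaled error bound
  have hsE : s * ‖E n‖ ≤ K * (a + b) / s := by
    have h1 := mul_le_mul_of_nonneg_left hE' hs0.le
    have h2 : s * (K * (a + b) / s ^ 2) = K * (a + b) / s := by
      field_simp
    rw [h2] at h1; linarith
  have hsE16 : s * ‖E n‖ ≤ (a + b) / 16 := by
    have h3 : K * (a + b) / s ≤ (a + b) / 16 := by
      rw [div_le_div_iff₀ hs0 (by norm_num : (0:ℝ) < 16)]
      have h4 := mul_le_mul_of_nonneg_right hsK (by linarith : (0:ℝ) ≤ a + b)
      linarith
    linarith
  have hsEK : s * ‖E n‖ ≤ K * (a + b) := by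
    have hKab : (0:ℝ) ≤ K * (a + b) := mul_nonneg hK.le (by linarith)
    have := div_le_self hKab hs1
    linarith
  -- scaled bounds on |A|
  have hsA_lo : s * a / 4 + |v| / 8 ≤ s * ‖A‖ := by
    have h1 := mul_le_mul_of_nonneg_left habsA_lo hs0.le
    have h2 : s * ((a / 2 + |v| / (4 * s)) / 2) = s * a / 4 + |v| / 8 := by
      field_simp; ring
    rw [h2] at h1; linarith
  have hsA_up : s * ‖A‖ ≤ s * a / 2 + |v| / 4 := by
    have h1 := mul_le_mul_of_nonneg_left habsA_up hs0.le
    have h2 : s * (a / 2 + |v| / (4 * s)) = s * a / 2 + |v| / 4 := by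
      field_simp
    rw [h2] at h1; linarith
  -- combine: lower bound
  have hsaC_lo : s * ‖A‖ - s * ‖E n‖ ≤ s * ‖C n‖ := by
    have h5 := mul_le_mul_of_nonneg_left hk1 hs0.le
    have h6 : s * (-‖E n‖) = -(s * ‖E n‖) := by ring
    have h7 : s * (‖C n‖ - ‖A‖)
        = s * ‖C n‖ - s * ‖A‖ := by ring
    rw [h6, h7] at h5; linarith
  have hsaC_up : s * ‖C n‖ ≤ s * ‖A‖ + s * ‖E n‖ := by
    have h5 := mul_le_mul_of_nonneg_left hk2 hs0.le
    have h7 : s * (‖C n‖ - ‖A‖)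
        = s * ‖C n‖ - s * ‖A‖ := by ring
    rw [h7] at h5; linarith
  have hp1 : 2 * ((b₁ + b₂) * a) ≤ s * a := by
    have := mul_le_mul_of_nonneg_right hsb ha0
    linarith
  have hp2 : a ≤ s * a := by
    have h8 := mul_le_mul_of_nonneg_right hs1 ha0
    linarith
  have hq_lo : (s * a + b) / 8 ≤ s * ‖C n‖ := by
    linarith
  have hp3 : (b₁ + b₂) * a ≤ (b₁ + b₂) * (s * a) :=
    mul_le_mul_of_nonneg_left hp2 (by linarith)
  have hp4 : K * a ≤ K * (s * a) := mul_le_mul_of_nonneg_left hp2 hK.le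
  have hp5 : 0 ≤ (b₁ + b₂) * b := mul_nonneg (by linarith) hb0
  have hq_up : s * ‖C n‖ ≤ M * (s * a + b) := by
    rw [hM]
    have hsa0 : 0 ≤ s * a := mul_nonneg hs0.le ha0
    linarith
  have ha2 : a ^ 2 = (u₀ n) ^ 2 := by rw [ha]; exact sq_abs _
  have hb2 : b ^ 2 = (u₁ n) ^ 2 := by rw [hb]; exact sq_abs _
  rw [← hs2, ← ha2, ← hb2]
  constructor
  · have h0 : (0:ℝ) ≤ (s * a + b) / 8 := by
      have := mul_nonneg hs0.le ha0; linarith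
    have hsq := mul_self_le_mul_self h0 hq_lo
    have hsab : (0:ℝ) ≤ s * a * b := mul_nonneg (mul_nonneg hs0.le ha0) hb0
    have e1 : s ^ 2 * ‖C n‖ ^ 2
        = (s * ‖C n‖) * (s * ‖C n‖) := by ring
    rw [e1]
    linarith [hsq, hsab]
  · have h0 : (0:ℝ) ≤ s * ‖C n‖ := mul_nonneg hs0.le haC0
    have hsq := mul_self_le_mul_self h0 hq_up
    have hMsq : (0:ℝ) ≤ M ^ 2 * (s * a - b) ^ 2 :=
      mul_nonneg (sq_nonneg M) (sq_nonneg (s * a - b))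
    have e1 : s ^ 2 * ‖C n‖ ^ 2
        = (s * ‖C n‖) * (s * ‖C n‖) := by ring
    rw [e1]
    linarith [hsq, hMsq]
end
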